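/- arXiv:1802.03204 — 8 statements merged into one kernel-verified Lean document; each statement's English description precedes it below -/
import Mathlib

section
/- Let W be a 3-dimensional complex linear subspace of the space of symmetric 3×3 matrices with complex entries (equivalently, of quadratic forms on ℂ³). If W contains an invertible matrix (i.e., a non-degenerate quadratic form), then there exists a vector v ∈ ℂ³ such that for every M ∈ W with M ≠ 0 one has M · v ≠ 0; that is, v is not in the kernel of any nonzero quadratic form in W. -/
/-!
After a congruence `M ↦ Sᵀ M S` we may assume `1 ∈ W`, and choose `A, B` with `1, A, B` a basis
of `W`. If `v, A v, B v` are linearly independent, then `M ↦ M v` maps `W` onto `ℂ³`, hence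
injectively, and `v` works. Otherwise the cubic form `v ↦ det (v, A v, B v)` vanishes
identically. Its ten coefficients only depend on `A` and `B` modulo scalars and, because `A` and
`B` are symmetric, form a triangular system in the ten Plücker coordinates of that pair. So `A`
and `B` are proportional modulo scalars, contradicting the independence of `1, A, B`.
-/

open Matrix Module

theorem Matrix.IsSymm.associated_toQuadraticForm' {R n : Type*} [CommRing R] [Invertible (2 : R)]
    [Fintype n] [DecidableEq n] {M : Matrix n n R} (hM : M.IsSymm) :
    QuadraticMap.associated M.toQuadraticForm' = toLinearMap₂' R M :=
  QuadraticMap.associated_left_inverse R fun x y => by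
    rw [toLinearMap₂'_apply', toLinearMap₂'_apply', dotProduct_mulVec, ← mulVec_transpose, hM.eq,
      dotProduct_comm]

theorem Matrix.IsSymm.exists_transpose_mul_mul_eq_one {K n : Type*} [Field K] [IsAlgClosed K]
    [Invertible (2 : K)] [Fintype n] [DecidableEq n] {M : Matrix n n K} (hM : M.IsSymm)
    (hdet : M.det ≠ 0) : ∃ S : Matrix n n K, IsUnit S ∧ Sᵀ * M * S = 1 := by
  have hsep {N : Matrix n n K} (hN : N.IsSymm) (hN' : N.det ≠ 0) :
      (QuadraticMap.associated N.toQuadraticForm').SeparatingLeft := by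
    rw [hN.associated_toQuadraticForm']
    exact LinearMap.separatingLeft_toLinearMap₂'_of_det_ne_zero' hN'
  obtain ⟨e⟩ := QuadraticForm.equivalent_of_isAlgClosed _ _ (hsep isSymm_one (by simp))
    (hsep hM hdet)
  refine ⟨LinearMap.toMatrix' e.toLinearEquiv.toLinearMap,
    LinearMap.isUnit_toMatrix'_iff.mpr ((Module.End.isUnit_iff _).mpr e.toLinearEquiv.bijective),
    ?_⟩
  have hQ : (1 : Matrix n n K).toQuadraticForm' =
      M.toQuadraticForm'.comp e.toLinearEquiv.toLinearMap := by
    ext x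
    exact (e.map_app x).symm
  have := congrArg QuadraticForm.toMatrix' hQ
  rw [QuadraticForm.toMatrix'_comp] at this
  simpa [QuadraticForm.toMatrix', hM.associated_toQuadraticForm',
    isSymm_one.associated_toQuadraticForm'] using this.symm

open Polynomial in
theorem eq_zero_of_forall_cubic_eq_zero {R : Type*} [CommRing R] [IsDomain R] [Infinite R]
    {c₀ c₁ c₂ c₃ : R} (h : ∀ t, c₀ + c₁ * t + c₂ * t ^ 2 + c₃ * t ^ 3 = 0) :
    c₀ = 0 ∧ c₁ = 0 ∧ c₂ = 0 ∧ c₃ = 0 := by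
  have hp : C c₀ + C c₁ * X + C c₂ * X ^ 2 + C c₃ * X ^ 3 = 0 :=
    Polynomial.funext fun t => by simpa using h t
  refine ⟨?_, ?_, ?_, ?_⟩
  · simpa using congrArg (coeff · 0) hp
  · simpa using congrArg (coeff · 1) hp
  · simpa using congrArg (coeff · 2) hp
  · simpa using congrArg (coeff · 3) hp

def pluckerCoord {ι R : Type*} [CommRing R] (a b : ι → R) (i j : ι) : R :=
  a i * b j - a j * b i

theorem exists_smul_add_smul_eq_zero_of_pluckerCoord_eq_zero {ι R : Type*} [CommRing R]
    [Nontrivial R] {a b : ι → R} (h : ∀ i j, pluckerCoord a b i j = 0) :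
    ∃ s t : R, (s ≠ 0 ∨ t ≠ 0) ∧ s • a + t • b = 0 := by
  by_cases ha : a = 0
  · exact ⟨1, 0, .inl one_ne_zero, by simp [ha]⟩
  obtain ⟨k, hk⟩ := Function.ne_iff.mp ha
  refine ⟨b k, -a k, .inr (neg_ne_zero.mpr hk), funext fun i => ?_⟩
  have hki : a k * b i - a i * b k = 0 := h k i
  simp only [Pi.add_apply, Pi.smul_apply, smul_eq_mul, Pi.zero_apply]
  linear_combination -hki

variable {K : Type*} [Field K]

def coordsModScalar : Matrix (Fin 3) (Fin 3) K →ₗ[K] Fin 5 → K where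
  toFun A := ![A 0 1, A 0 2, A 1 2, A 1 1 - A 0 0, A 2 2 - A 0 0]
  map_add' A B := by ext i; fin_cases i <;> simp <;> ring
  map_smul' c A := by ext i; fin_cases i <;> simp <;> ring

theorem Matrix.IsSymm.eq_smul_one_of_coordsModScalar_eq_zero {A : Matrix (Fin 3) (Fin 3) K}
    (hA : A.IsSymm) (h : coordsModScalar A = 0) : A = A 0 0 • 1 := by
  have h01 : A 0 1 = 0 := congrFun h 0
  have h02 : A 0 2 = 0 := congrFun h 1
  have h12 : A 1 2 = 0 := congrFun h 2
  have h11 : A 1 1 = A 0 0 := sub_eq_zero.mp (congrFun h 3)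
  have h22 : A 2 2 = A 0 0 := sub_eq_zero.mp (congrFun h 4)
  ext i j
  fin_cases i <;> fin_cases j <;>
    simp [hA.apply 0 1, hA.apply 0 2, hA.apply 1 2, h01, h02, h12, h11, h22]

theorem det_vec_mulVec_mulVec {A B : Matrix (Fin 3) (Fin 3) K} (hA : A.IsSymm) (hB : B.IsSymm)
    (x y z : K) :
    let P := pluckerCoord (coordsModScalar A) (coordsModScalar B)
    (of ![![x, y, z], A *ᵥ ![x, y, z], B *ᵥ ![x, y, z]]).det =
      P 0 1 * x ^ 3 + (P 3 1 + P 0 2) * x ^ 2 * y + (P 0 4 + P 2 1) * x ^ 2 * z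
      + (P 3 2 - P 0 1) * x * y ^ 2 + P 3 4 * x * y * z + (P 2 4 - P 0 1) * x * z ^ 2
      - P 0 2 * y ^ 3 + (P 0 3 - P 0 4 - P 1 2) * y ^ 2 * z + (P 1 3 + P 4 1 + P 0 2) * y * z ^ 2
      + P 1 2 * z ^ 3 := by
  intro P
  simp only [P, pluckerCoord, coordsModScalar, LinearMap.coe_mk, AddHom.coe_mk, det_fin_three,
    of_apply, mulVec, dotProduct, Fin.sum_univ_three, cons_val', cons_val_zero, cons_val_one,
    cons_val, cons_val_fin_one]
  rw [hA.apply 0 1, hA.apply 0 2, hA.apply 1 2, hB.apply 0 1, hB.apply 0 2, hB.apply 1 2]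
  ring

theorem pluckerCoord_coordsModScalar_eq_zero [Infinite K] {A B : Matrix (Fin 3) (Fin 3) K}
    (hA : A.IsSymm) (hB : B.IsSymm) (h : ∀ v, (of ![v, A *ᵥ v, B *ᵥ v]).det = 0) (i j : Fin 5) :
    pluckerCoord (coordsModScalar A) (coordsModScalar B) i j = 0 := by
  set P := pluckerCoord (coordsModScalar A) (coordsModScalar B)
  have hf x y z := (det_vec_mulVec_mulVec hA hB x y z).symm.trans (h ![x, y, z])
  obtain ⟨h01, h31, h32, h02⟩ := eq_zero_of_forall_cubic_eq_zero (c₀ := P 0 1)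
    (c₁ := P 3 1 + P 0 2) (c₂ := P 3 2 - P 0 1) (c₃ := -P 0 2) fun t => by
    linear_combination hf 1 t 0
  obtain ⟨-, h04, h24, h12⟩ := eq_zero_of_forall_cubic_eq_zero (c₀ := P 0 1)
    (c₁ := P 0 4 + P 2 1) (c₂ := P 2 4 - P 0 1) (c₃ := P 1 2) fun t => by
    linear_combination hf 1 0 t
  obtain ⟨-, h03, h14, -⟩ := eq_zero_of_forall_cubic_eq_zero (c₀ := -P 0 2)
    (c₁ := P 0 3 - P 0 4 - P 1 2) (c₂ := P 1 3 + P 4 1 + P 0 2) (c₃ := P 1 2) fun t => by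
    linear_combination hf 0 1 t
  have h34 := hf 1 1 1
  simp only [P, pluckerCoord] at *
  fin_cases i <;> fin_cases j <;> grind

theorem not_linearIndependent_of_forall_det_eq_zero [Infinite K]
    {A B : Matrix (Fin 3) (Fin 3) K}
    (hA : A.IsSymm) (hB : B.IsSymm) (h : ∀ v, (of ![v, A *ᵥ v, B *ᵥ v]).det = 0) :
    ¬LinearIndependent K ![1, A, B] := by
  obtain ⟨s, t, hst, hcomb⟩ := exists_smul_add_smul_eq_zero_of_pluckerCoord_eq_zero
    (pluckerCoord_coordsModScalar_eq_zero hA hB h)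
  have hsymm : (s • A + t • B).IsSymm := (hA.smul s).add (hB.smul t)
  have hscalar := hsymm.eq_smul_one_of_coordsModScalar_eq_zero (by simpa using hcomb)
  set c := (s • A + t • B) 0 0
  rw [Fintype.not_linearIndependent_iff]
  refine ⟨![-c, s, t], ?_, ?_⟩
  · simp only [Fin.sum_univ_three, cons_val_zero, cons_val_one, cons_val_two, tail_cons, head_cons]
    rw [add_assoc, hscalar, neg_smul, neg_add_cancel]
  · rcases hst with hs | ht
    · exact ⟨1, hs⟩
    · exact ⟨2, ht⟩

theorem exists_linearIndependent_one_of_finrank_eq_three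
    {W : Submodule K (Matrix (Fin 3) (Fin 3) K)}
    (hdim : finrank K W = 3) (hone : 1 ∈ W) :
    ∃ A ∈ W, ∃ B ∈ W, LinearIndependent K ![1, A, B] := by
  have h1 : LinearIndependent K ![(⟨1, hone⟩ : W)] :=
    linearIndependent_unique_iff.mpr (by simp)
  obtain ⟨A, hA⟩ := exists_linearIndependent_snoc_of_lt_finrank h1 (by omega)
  obtain ⟨B, hB⟩ := exists_linearIndependent_snoc_of_lt_finrank hA (by omega)
  refine ⟨A, A.2, B, B.2, ?_⟩
  have hfun :
      W.subtype ∘ Fin.snoc (Fin.snoc ![⟨1, hone⟩] A) B = ![1, (A : Matrix _ _ K), B] := by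
    ext i : 1
    fin_cases i <;> simp
  exact hfun ▸ hB.map' W.subtype W.ker_subtype

theorem exists_mulVec_ne_zero_of_one_mem [Infinite K]
    {W : Submodule K (Matrix (Fin 3) (Fin 3) K)} (hsymm : ∀ M ∈ W, M.IsSymm)
    (hdim : finrank K W = 3) (hone : 1 ∈ W) :
    ∃ v : Fin 3 → K, ∀ M ∈ W, M ≠ 0 → M *ᵥ v ≠ 0 := by
  obtain ⟨A, hA, B, hB, hind⟩ := exists_linearIndependent_one_of_finrank_eq_three hdim hone
  obtain ⟨v, hv⟩ : ∃ v, (of ![v, A *ᵥ v, B *ᵥ v]).det ≠ 0 := by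
    by_contra! h
    exact not_linearIndependent_of_forall_det_eq_zero (hsymm A hA) (hsymm B hB) h hind
  let Φ : W →ₗ[K] Fin 3 → K := (mulVecBilin K K).flip v ∘ₗ W.subtype
  have hsurj : Function.Surjective Φ := by
    intro w
    obtain ⟨c, rfl⟩ := vecMul_surjective_iff_isUnit.mpr
      ((isUnit_iff_isUnit_det _).mpr hv.isUnit) w
    have hmem : c 0 • 1 + c 1 • A + c 2 • B ∈ W :=
      W.add_mem (W.add_mem (W.smul_mem _ hone) (W.smul_mem _ hA)) (W.smul_mem _ hB)
    refine ⟨⟨_, hmem⟩, ?_⟩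
    ext i
    simp [Φ, vecMul, dotProduct, Fin.sum_univ_three]
  have hinj : Function.Injective Φ :=
    (LinearMap.injective_iff_surjective_of_finrank_eq_finrank (by simp [hdim])).mpr hsurj
  refine ⟨v, fun M hM hne hMv => hne ?_⟩
  simpa using congrArg Subtype.val (hinj (a₁ := ⟨M, hM⟩) (a₂ := 0) (by simpa [Φ] using hMv))

theorem exists_mulVec_ne_zero_of_transpose_mul_mul_eq_one [Infinite K]
    {W : Submodule K (Matrix (Fin 3) (Fin 3) K)} (hsymm : ∀ M ∈ W, M.IsSymm)
    (hdim : finrank K W = 3) {M₀ S : Matrix (Fin 3) (Fin 3) K} (hM₀ : M₀ ∈ W) (hS : IsUnit S)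
    (hS₀ : Sᵀ * M₀ * S = 1) :
    ∃ v : Fin 3 → K, ∀ M ∈ W, M ≠ 0 → M *ᵥ v ≠ 0 := by
  let f := LinearMap.mulLeft K Sᵀ ∘ₗ LinearMap.mulRight K S
  have hf : Function.Injective f := fun M N h =>
    hS.mul_right_cancel (((isUnit_transpose S).mpr hS).mul_left_cancel
      (by simpa [f, mul_assoc] using h))
  have hsymm' : ∀ M ∈ W.map f, M.IsSymm := by
    rintro _ ⟨M, hM, rfl⟩
    simp [f, IsSymm, transpose_mul, (hsymm M hM).eq, Matrix.mul_assoc]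
  obtain ⟨w, hw⟩ := exists_mulVec_ne_zero_of_one_mem hsymm'
    ((Submodule.equivMapOfInjective f hf W).finrank_eq.symm.trans hdim)
    ⟨M₀, hM₀, by simp [f, ← mul_assoc, hS₀]⟩
  refine ⟨S *ᵥ w, fun M hM hne hMv => hw (f M) (W.mem_map_of_mem hM) ?_ ?_⟩
  · simpa using hf.ne hne
  · simp [f, ← mulVec_mulVec, hMv]

/-- If `W` is a 3-dimensional complex linear subspace of symmetric
3×3 complex matrices containing an invertible matrix, then there is a vector
`v ∈ ℂ³` not in the kernel of any nonzero element of `W`. -/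
theorem stmt_0 (W : Submodule ℂ (Matrix (Fin 3) (Fin 3) ℂ))
    (hsymm : ∀ M ∈ W, M.IsSymm)
    (hdim : Module.finrank ℂ W = 3)
    (hunit : ∃ M ∈ W, IsUnit M) :
    ∃ v : Fin 3 → ℂ, ∀ M ∈ W, M ≠ 0 → M.mulVec v ≠ 0 := by
  obtain ⟨M₀, hM₀, hunit⟩ := hunit
  obtain ⟨S, hS, hS₀⟩ := (hsymm M₀ hM₀).exists_transpose_mul_mul_eq_one
    ((isUnit_iff_isUnit_det M₀).mp hunit).ne_zero
  exact exists_mulVec_ne_zero_of_transpose_mul_mul_eq_one hsymm hdim hM₀ hS hS₀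
end

section
/- Every 2-dimensional complex linear subspace W of the space of symmetric 2×2 matrices with complex entries contains an invertible matrix, and there exists a vector v ∈ ℂ² such that for every M ∈ W with M ≠ 0 one has M · v ≠ 0. -/
/-!
If every matrix in `W` were singular, the determinant would vanish on a basis `M, N` of `W` and
on `M + N`. For symmetric `2 × 2` matrices these three equations force the entries of `M` and
`N` to be proportional, contradicting independence; so `W` contains an invertible `A`.
Writing `W = span {A, B}`, the matrix `A⁻¹ B` is not a scalar, hence has a vector `v` that is
not an eigenvector; then `(x A + y B) v = A (x v + y A⁻¹ B v)` vanishes only for `x = y = 0`.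
-/

open Matrix Module Submodule

theorem Matrix.smul_eq_smul_of_det_eq_zero {R : Type*} [CommRing R] [NoZeroDivisors R]
    {M N : Matrix (Fin 2) (Fin 2) R} (hM : M.IsSymm) (hN : N.IsSymm)
    (hM₀ : M.det = 0) (hN₀ : N.det = 0) (hMN₀ : (M + N).det = 0) (i j : Fin 2) :
    N i j • M = M i j • N := by
  have hM₁ := hM.apply 0 1
  have hN₁ := hN.apply 0 1
  simp only [det_fin_two, add_apply, hM₁, hN₁] at hM₀ hN₀ hMN₀
  have hpolar : M 0 0 * N 1 1 + M 1 1 * N 0 0 - 2 * (M 0 1 * N 0 1) = 0 := by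
    linear_combination hMN₀ - hM₀ - hN₀
  -- each squared minor is a combination of the three vanishing determinants
  have h₀₁ : M 0 0 * N 0 1 = M 0 1 * N 0 0 := by
    refine sub_eq_zero.1 (pow_eq_zero_iff two_ne_zero |>.1 ?_)
    linear_combination (M 0 0 * N 0 0) * hpolar - M 0 0 ^ 2 * hN₀ - N 0 0 ^ 2 * hM₀
  have h₀₂ : M 0 0 * N 1 1 = M 1 1 * N 0 0 := by
    refine sub_eq_zero.1 (pow_eq_zero_iff two_ne_zero |>.1 ?_)
    linear_combination (M 0 0 * N 1 1 + M 1 1 * N 0 0 + 2 * (M 0 1 * N 0 1)) * hpolar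
      - 4 * (N 0 0 * N 1 1) * hM₀ - 4 * M 0 1 ^ 2 * hN₀
  have h₁₂ : M 0 1 * N 1 1 = M 1 1 * N 0 1 := by
    refine sub_eq_zero.1 (pow_eq_zero_iff two_ne_zero |>.1 ?_)
    linear_combination (M 1 1 * N 1 1) * hpolar - M 1 1 ^ 2 * hN₀ - N 1 1 ^ 2 * hM₀
  ext k l
  fin_cases i <;> fin_cases j <;> fin_cases k <;> fin_cases l <;>
    simp only [smul_apply, smul_eq_mul] <;> grind

theorem Submodule.exists_eq_span_pair_of_finrank_eq_two {K V : Type*} [Field K] [AddCommGroup V]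
    [Module K V] {W : Submodule K V} (hW : finrank K W = 2) {x : V} (hxW : x ∈ W) (hx : x ≠ 0) :
    ∃ y, LinearIndependent K ![x, y] ∧ W = span K {x, y} := by
  obtain ⟨y, hxy⟩ := exists_linearIndependent_pair_of_one_lt_finrank (by omega : 1 < finrank K W)
    (x := ⟨x, hxW⟩) (by simpa using hx)
  have hxy' : LinearIndependent K ![x, (y : V)] := by
    refine (LinearIndependent.pair_iff' hx).2 fun a h ↦ ?_
    exact (LinearIndependent.pair_iff' (by simpa using hx)).1 hxy a (Subtype.ext h)
  have : FiniteDimensional K W := .of_finrank_pos (by omega)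
  refine ⟨y, hxy', (eq_of_le_of_finrank_eq ?_ ?_).symm⟩
  · simpa [span_le, Set.insert_subset_iff] using hxW
  · rw [hW, ← range_cons_cons_empty x y ![], finrank_span_eq_card hxy', Fintype.card_fin]

theorem Matrix.exists_isUnit_of_isSymm_of_finrank_eq_two {K : Type*} [Field K]
    {W : Submodule K (Matrix (Fin 2) (Fin 2) K)} (hsymm : ∀ M ∈ W, M.IsSymm)
    (hW : finrank K W = 2) : ∃ M ∈ W, IsUnit M := by
  by_contra! hsing
  have hdet : ∀ M ∈ W, M.det = 0 := fun M hM ↦ by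
    simpa [isUnit_iff_isUnit_det] using hsing M hM
  obtain ⟨M, hMW, hM⟩ := W.exists_mem_ne_zero_of_ne_bot (by rintro rfl; simp at hW)
  obtain ⟨N, hMN, rfl⟩ := exists_eq_span_pair_of_finrank_eq_two hW hMW hM
  have hNW : N ∈ span K {M, N} := subset_span (by simp)
  refine hM (ext fun i j ↦ neg_eq_zero.1 (LinearIndependent.pair_iff.1 hMN (N i j) (-M i j) ?_).2)
  rw [neg_smul, ← sub_eq_add_neg, sub_eq_zero]
  exact smul_eq_smul_of_det_eq_zero (hsymm M hMW) (hsymm N hNW) (hdet M hMW) (hdet N hNW)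
    (hdet _ (add_mem hMW hNW)) i j

theorem Matrix.exists_mulVec_ne_zero_of_isUnit_mem {K n : Type*} [Field K] [Fintype n]
    [DecidableEq n] {W : Submodule K (Matrix n n K)} (hW : finrank K W = 2) {A : Matrix n n K}
    (hAW : A ∈ W) (hA : IsUnit A) : ∃ v, ∀ M ∈ W, M ≠ 0 → M *ᵥ v ≠ 0 := by
  have hA₀ : A ≠ 0 := by
    rintro rfl
    have : Subsingleton (Matrix n n K) := subsingleton_of_zero_eq_one (isUnit_zero_iff.1 hA)
    simp [finrank_zero_of_subsingleton] at hW
  obtain ⟨B, hAB, rfl⟩ := W.exists_eq_span_pair_of_finrank_eq_two hW hAW hA₀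
  set C : Matrix n n K := (hA.unit⁻¹ : (Matrix n n K)ˣ) * B
  have hAC : A * C = B := hA.unit.mul_inv_cancel_left B
  obtain ⟨v, hv⟩ : ∃ v, LinearIndependent K ![v, C *ᵥ v] := by
    by_contra! h
    obtain ⟨a, ha⟩ := LinearMap.exists_eq_smul_id_of_forall_notLinearIndependent (f := toLin' C) h
    have hC : C = a • 1 := toLin'.injective (by rw [ha, map_smul, toLin'_one]; rfl)
    exact (LinearIndependent.pair_iff' hA₀).1 hAB a (by rw [← hAC, hC, Matrix.mul_smul, mul_one])
  refine ⟨v, fun M hM hM₀ hMv ↦ hM₀ ?_⟩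
  obtain ⟨x, y, rfl⟩ := mem_span_pair.1 hM
  have : x • v + y • C *ᵥ v = 0 := by
    refine mulVec_injective_iff_isUnit.2 hA ?_
    rw [mulVec_zero, ← hMv, mulVec_add, mulVec_smul, mulVec_smul, mulVec_mulVec, hAC,
      add_mulVec, smul_mulVec, smul_mulVec]
  obtain ⟨rfl, rfl⟩ := LinearIndependent.pair_iff.1 hv x y this
  simp

/-- Every 2-dimensional complex linear subspace of symmetric 2×2
complex matrices contains an invertible matrix, and there is a vector `v ∈ ℂ²`
not in the kernel of any nonzero element of `W`. -/
theorem stmt_1 (W : Submodule ℂ (Matrix (Fin 2) (Fin 2) ℂ))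
    (hsymm : ∀ M ∈ W, M.IsSymm)
    (hdim : Module.finrank ℂ W = 2) :
    (∃ M ∈ W, IsUnit M) ∧
      ∃ v : Fin 2 → ℂ, ∀ M ∈ W, M ≠ 0 → M.mulVec v ≠ 0 := by
  obtain ⟨A, hAW, hA⟩ := exists_isUnit_of_isSymm_of_finrank_eq_two hsymm hdim
  exact ⟨⟨A, hAW, hA⟩, exists_mulVec_ne_zero_of_isUnit_mem hdim hAW hA⟩
end

section
/- Let U ⊆ ℂ^d be a connected open set, let k be a natural number, and let f₁, …, f_k, g₁, …, g_k : U → ℂ be holomorphic functions such that ∑_{i=1}^{k} f_i(z) · conj(g_i(z)) = 0 for all z ∈ U, where conj denotes complex conjugation. Then ∑_{i=1}^{k} f_i(z) · conj(g_i(w)) = 0 for all z, w ∈ U. -/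
/-!
Fix `z ∈ U`. Since `w ↦ ∑ conj (fᵢ z) * gᵢ w` is holomorphic on the connected set `U`, the identity
theorem reduces the claim to `w` near `z`, and restricting to the complex line through `z` and `w`
reduces that to one variable. There, differentiating `∑ fᵢ(t) * conj (gᵢ(t)) = 0` in the real
directions `1` and `I` separates the holomorphic from the antiholomorphic factor and gives
`∑ fᵢ(t) * conj (gᵢ⁽ⁿ⁾(t)) = 0` for all `n`; the Taylor expansions of the `gᵢ` at `t` then give
`∑ fᵢ(t) * conj (gᵢ(s)) = 0` for `s` near `t`.
-/

open Complex ComplexConjugate Filter Metric Set Topology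

lemma HasDerivAt.comp_ofReal_line {f : ℂ → ℂ} {f' t : ℂ} (hf : HasDerivAt f f' t) (v : ℂ) :
    HasDerivAt (fun x : ℝ => f (t + x * v)) (f' * v) 0 := by
  have hline : HasDerivAt (fun u : ℂ => t + u * v) v ((0 : ℝ) : ℂ) := by
    simpa using ((hasDerivAt_id _).mul_const v).const_add t
  exact (hf.comp_of_eq _ hline (by simp)).comp_ofReal

section OneVariable

variable {ι : Type*} [Fintype ι] {D : Set ℂ} {f g : ι → ℂ → ℂ}

lemma sum_mul_conj_deriv_eq_zero (hD : IsOpen D) (hf : ∀ i, DifferentiableOn ℂ (f i) D)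
    (hg : ∀ i, DifferentiableOn ℂ (g i) D) (h : ∀ t ∈ D, ∑ i, f i t * conj (g i t) = 0) :
    ∀ t ∈ D, ∑ i, f i t * conj (deriv (g i) t) = 0 := by
  intro t ht
  set A := ∑ i, deriv (f i) t * conj (g i t)
  set B := ∑ i, f i t * conj (deriv (g i) t)
  have hline : ∀ v : ℂ, A * v + B * conj v = 0 := by
    intro v
    have hderiv : HasDerivAt (fun x : ℝ => ∑ i, f i (t + x * v) * conj (g i (t + x * v)))
        (A * v + B * conj v) 0 := by
      have := HasDerivAt.fun_sum (u := Finset.univ) fun i _ =>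
        (((hf i).differentiableAt (hD.mem_nhds ht)).hasDerivAt.comp_ofReal_line v).fun_mul
          (((hg i).differentiableAt (hD.mem_nhds ht)).hasDerivAt.comp_ofReal_line v).star
      simp only [Complex.star_def, ofReal_zero, zero_mul, add_zero] at this
      refine this.congr_deriv ?_
      simp only [A, B, Finset.sum_mul, ← Finset.sum_add_distrib, map_mul]
      exact Finset.sum_congr rfl fun i _ => by ring
    have hzero : (fun x : ℝ => ∑ i, f i (t + x * v) * conj (g i (t + x * v))) =ᶠ[𝓝 0]
        fun _ => 0 := by
      have hcont : Tendsto (fun x : ℝ => t + x * v) (𝓝 0) (𝓝 t) := by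
        have : Continuous (fun x : ℝ => t + x * v) := by fun_prop
        simpa using this.tendsto 0
      filter_upwards [hcont.eventually_mem (hD.mem_nhds ht)] with x hx using h _ hx
    exact hderiv.unique ((hasDerivAt_const _ _).congr_of_eventuallyEq hzero)
  have h2IB : (2 * I) * B = 0 := by
    have h1 := hline 1
    have hI := hline I
    simp only [map_one, conj_I] at h1 hI
    linear_combination I * h1 - hI
  simpa [I_ne_zero] using h2IB

lemma sum_mul_conj_iterate_deriv_eq_zero (hD : IsOpen D) (hf : ∀ i, DifferentiableOn ℂ (f i) D)
    (hg : ∀ i, DifferentiableOn ℂ (g i) D) (h : ∀ t ∈ D, ∑ i, f i t * conj (g i t) = 0) (n : ℕ) :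
    ∀ t ∈ D, ∑ i, f i t * conj (deriv^[n] (g i) t) = 0 := by
  induction n with
  | zero => simpa using h
  | succ n ih =>
    simp only [Function.iterate_succ_apply']
    exact sum_mul_conj_deriv_eq_zero hD hf
      (fun i => (((hg i).analyticOnNhd hD).iterated_deriv n).differentiableOn) ih

lemma eventually_sum_mul_conj_eq_zero (hD : IsOpen D) (hf : ∀ i, DifferentiableOn ℂ (f i) D)
    (hg : ∀ i, DifferentiableOn ℂ (g i) D) (h : ∀ t ∈ D, ∑ i, f i t * conj (g i t) = 0)
    {t : ℂ} (ht : t ∈ D) : ∀ᶠ s in 𝓝 t, ∑ i, f i t * conj (g i s) = 0 := by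
  obtain ⟨r, hr, hball⟩ := isOpen_iff.1 hD t ht
  filter_upwards [ball_mem_nhds t hr] with s hs
  have htaylor : HasSum
      (fun n => ∑ i, f i t * conj ((n.factorial : ℂ)⁻¹ • (s - t) ^ n • iteratedDeriv n (g i) t))
      (∑ i, f i t * conj (g i s)) :=
    hasSum_sum fun i _ => (Complex.hasSum_conj'.2
      (Complex.hasSum_taylorSeries_on_ball ((hg i).mono hball) hs)).mul_left _
  have hterm : ∀ n : ℕ,
      ∑ i, f i t * conj ((n.factorial : ℂ)⁻¹ • (s - t) ^ n • iteratedDeriv n (g i) t) = 0 := by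
    intro n
    calc _ = conj ((n.factorial : ℂ)⁻¹ * (s - t) ^ n) * ∑ i, f i t * conj (deriv^[n] (g i) t) := by
          rw [Finset.mul_sum]
          exact Finset.sum_congr rfl fun i _ => by
            simp only [smul_eq_mul, map_mul, iteratedDeriv_eq_iterate]; ring
      _ = 0 := by rw [sum_mul_conj_iterate_deriv_eq_zero hD hf hg h n t ht, mul_zero]
  exact htaylor.unique (by simpa only [hterm] using hasSum_zero)

end OneVariable

section IdentityTheorem

variable {E : Type*} [NormedAddCommGroup E] [NormedSpace ℂ E]

lemma Convex.isPreconnected_preimage_line {V : Set E} (hV : Convex ℝ V) (z w : E) :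
    IsPreconnected {t : ℂ | z + t • (w - z) ∈ V} := by
  refine Convex.isPreconnected fun a ha b hb s t hs ht hst => ?_
  have hcomb : z + (s • a + t • b) • (w - z) = s • (z + a • (w - z)) + t • (z + b • (w - z)) := by
    rw [add_smul, smul_assoc, smul_assoc, smul_add, smul_add, add_add_add_comm, ← add_smul, hst,
      one_smul]
  simpa only [mem_ofPred_eq, hcomb] using hV ha hb hs ht hst

variable {F : Type*} [NormedAddCommGroup F] [NormedSpace ℂ F] [CompleteSpace F]

theorem DifferentiableOn.eqOn_zero_of_convex {f : E → F} {V : Set E} (hf : DifferentiableOn ℂ f V)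
    (hVo : IsOpen V) (hVc : Convex ℝ V) {z₀ : E} (hz₀ : z₀ ∈ V) (h : f =ᶠ[𝓝 z₀] 0) :
    EqOn f 0 V := by
  intro w hw
  set ℓ : ℂ → E := fun t => z₀ + t • (w - z₀)
  have hℓ : Differentiable ℂ ℓ := by fun_prop
  have hline := ((hf.comp hℓ.differentiableOn (mapsTo_preimage ℓ V)).analyticOnNhd
    (hVo.preimage hℓ.continuous)).eqOn_zero_of_preconnected_of_eventuallyEq_zero
    (hVc.isPreconnected_preimage_line z₀ w) (show (0 : ℂ) ∈ ℓ ⁻¹' V by simpa [ℓ] using hz₀)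
    (h.comp_tendsto (by simpa [ℓ] using hℓ.continuous.tendsto 0))
  simpa [ℓ] using hline (show (1 : ℂ) ∈ ℓ ⁻¹' V by simpa [ℓ] using hw)

theorem DifferentiableOn.eqOn_zero_of_isPreconnected {f : E → F} {U : Set E}
    (hf : DifferentiableOn ℂ f U) (hUo : IsOpen U) (hUc : IsPreconnected U) {z₀ : E} (hz₀ : z₀ ∈ U)
    (h : f =ᶠ[𝓝 z₀] 0) : EqOn f 0 U := by
  have hsub : U ⊆ {z | f =ᶠ[𝓝 z] 0} := by
    refine hUc.subset_of_closure_inter_subset isOpen_setOfPred_eventually_nhds ⟨z₀, hz₀, h⟩ ?_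
    rintro x ⟨hxS, hxU⟩
    obtain ⟨r, hr, hball⟩ := isOpen_iff.1 hUo x hxU
    obtain ⟨q, hqr, hqS⟩ := mem_closure_iff_nhds.1 hxS _ (ball_mem_nhds x hr)
    exact eventually_of_mem (ball_mem_nhds x hr)
      ((hf.mono hball).eqOn_zero_of_convex isOpen_ball (convex_ball x r) hqr hqS)
  exact fun z hz => (hsub hz).self_of_nhds

end IdentityTheorem

section Separation

variable {ι : Type*} [Fintype ι] {E : Type*} [NormedAddCommGroup E] [NormedSpace ℂ E]

theorem sum_mul_conj_eq_zero_of_eventually {U : Set E} (hUo : IsOpen U) (hUc : IsPreconnected U)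
    {f g : ι → E → ℂ} (hg : ∀ i, DifferentiableOn ℂ (g i) U)
    (h : ∀ z ∈ U, ∀ᶠ w in 𝓝 z, ∑ i, f i z * conj (g i w) = 0) :
    ∀ z ∈ U, ∀ w ∈ U, ∑ i, f i z * conj (g i w) = 0 := by
  intro z hz
  have hconj : ∀ w, ∑ i, conj (f i z) * g i w = conj (∑ i, f i z * conj (g i w)) := by
    simp [map_sum]
  have hG : DifferentiableOn ℂ (fun w => ∑ i, conj (f i z) * g i w) U :=
    DifferentiableOn.fun_sum fun i _ => (hg i).const_mul _
  have hzero := hG.eqOn_zero_of_isPreconnected hUo hUc hz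
    ((h z hz).mono fun w hw => by simp only [Pi.zero_apply, hconj, hw, map_zero])
  intro w hw
  simpa only [Pi.zero_apply, hconj, map_eq_zero] using hzero hw

theorem sum_mul_conj_eq_zero_of_isPreconnected {D : Set ℂ} (hDo : IsOpen D)
    (hDc : IsPreconnected D) {f g : ι → ℂ → ℂ} (hf : ∀ i, DifferentiableOn ℂ (f i) D)
    (hg : ∀ i, DifferentiableOn ℂ (g i) D) (h : ∀ t ∈ D, ∑ i, f i t * conj (g i t) = 0) :
    ∀ t ∈ D, ∀ s ∈ D, ∑ i, f i t * conj (g i s) = 0 :=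
  sum_mul_conj_eq_zero_of_eventually hDo hDc hg fun _ ht =>
    eventually_sum_mul_conj_eq_zero hDo hf hg h ht

theorem sum_mul_conj_eq_zero_of_convex {V : Set E} (hVo : IsOpen V) (hVc : Convex ℝ V)
    {f g : ι → E → ℂ} (hf : ∀ i, DifferentiableOn ℂ (f i) V) (hg : ∀ i, DifferentiableOn ℂ (g i) V)
    (h : ∀ z ∈ V, ∑ i, f i z * conj (g i z) = 0) :
    ∀ z ∈ V, ∀ w ∈ V, ∑ i, f i z * conj (g i w) = 0 := by
  intro z hz w hw
  set ℓ : ℂ → E := fun t => z + t • (w - z)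
  have hℓ : Differentiable ℂ ℓ := by fun_prop
  have hline := sum_mul_conj_eq_zero_of_isPreconnected (hVo.preimage hℓ.continuous)
    (hVc.isPreconnected_preimage_line z w)
    (fun i => (hf i).comp hℓ.differentiableOn (mapsTo_preimage ℓ V))
    (fun i => (hg i).comp hℓ.differentiableOn (mapsTo_preimage ℓ V)) (fun t ht => h _ ht)
    0 (by simpa [ℓ] using hz) 1 (by simpa [ℓ] using hw)
  simpa [ℓ] using hline

end Separation

/-- If `f₁,…,f_k, g₁,…,g_k` are holomorphic on a connected open
`U ⊆ ℂ^d` and `∑ fᵢ(z) ⋅ conj(gᵢ(z)) = 0` on `U`, then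
`∑ fᵢ(z) ⋅ conj(gᵢ(w)) = 0` for all `z, w ∈ U`. -/
theorem stmt_2 (d k : ℕ) (U : Set (Fin d → ℂ)) (hUo : IsOpen U)
    (hUc : IsConnected U)
    (f g : Fin k → (Fin d → ℂ) → ℂ)
    (hf : ∀ i, DifferentiableOn ℂ (f i) U)
    (hg : ∀ i, DifferentiableOn ℂ (g i) U)
    (h : ∀ z ∈ U, ∑ i, f i z * (starRingEnd ℂ) (g i z) = 0) :
    ∀ z ∈ U, ∀ w ∈ U, ∑ i, f i z * (starRingEnd ℂ) (g i w) = 0 := by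
  refine sum_mul_conj_eq_zero_of_eventually hUo hUc.isPreconnected hg fun z hz => ?_
  obtain ⟨r, hr, hball⟩ := isOpen_iff.1 hUo z hz
  have hlocal := sum_mul_conj_eq_zero_of_convex isOpen_ball (convex_ball z r)
    (fun i => (hf i).mono hball) (fun i => (hg i).mono hball) fun x hx => h x (hball hx)
  filter_upwards [ball_mem_nhds z hr] with w hw using hlocal z (mem_ball_self hr) w hw
end

section
/- Let U ⊆ ℝ^m be an open set and let f : ℝ^m → ℝ^n be continuously differentiable on U. Suppose there is a dense open subset U′ ⊆ U such that for every x ∈ U′ the derivative of f at x (as a linear map ℝ^m → ℝ^n) is surjective. Then for every dense subset Z ⊆ ℝ^n, the set U ∩ f⁻¹(Z) is dense in U. -/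
/-!
Near a point where the derivative is surjective, a `C¹` map is open (the surjective-derivative
form of the inverse function theorem), so the preimage of a dense set accumulates at every
such point. These points are dense in `U`, hence so is `U ∩ f⁻¹(Z)`.
-/

open Filter Topology Set

section Topology

variable {X Y : Type*} [TopologicalSpace X] [TopologicalSpace Y] {f : X → Y}

theorem mem_closure_preimage_of_nhds_le_map {x : X} (hx : 𝓝 (f x) ≤ map f (𝓝 x))
    {Z : Set Y} (hZ : Dense Z) : x ∈ closure (f ⁻¹' Z) := by
  refine mem_closure_iff_nhds.2 fun t ht => ?_
  obtain ⟨_, hz, y, hyt, rfl⟩ := hZ.inter_nhds_nonempty (hx (image_mem_map ht))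
  exact ⟨y, hyt, hz⟩

theorem IsOpen.subset_closure_inter_preimage {U U' : Set X} (hU : IsOpen U)
    (hU'd : U ⊆ closure U') (hopen : ∀ x ∈ U ∩ U', 𝓝 (f x) ≤ map f (𝓝 x))
    {Z : Set Y} (hZ : Dense Z) : U ⊆ closure (U ∩ f ⁻¹' Z) := by
  have hUU' : U ⊆ closure (U ∩ U') := fun x hx => hU.inter_closure ⟨hx, hU'd hx⟩
  have hpts : U ∩ U' ⊆ closure (U ∩ f ⁻¹' Z) := fun x hx =>
    hU.inter_closure ⟨hx.1, mem_closure_preimage_of_nhds_le_map (hopen x hx) hZ⟩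
  exact hUU'.trans (closure_minimal hpts isClosed_closure)

end Topology

theorem ContDiffAt.map_nhds_eq_of_surjective {𝕜 E F : Type*} [RCLike 𝕜]
    [NormedAddCommGroup E] [NormedSpace 𝕜 E] [CompleteSpace E]
    [NormedAddCommGroup F] [NormedSpace 𝕜 F] [CompleteSpace F]
    {f : E → F} {x : E} {n : WithTop ℕ∞} (hf : ContDiffAt 𝕜 n f x) (hn : n ≠ 0)
    (hsurj : Function.Surjective (fderiv 𝕜 f x)) : map f (𝓝 x) = 𝓝 (f x) :=
  (hf.hasStrictFDerivAt hn).map_nhds_eq_of_surj (LinearMap.range_eq_top.2 hsurj)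

theorem stmt_6_general (m n : ℕ) (U : Set (EuclideanSpace ℝ (Fin m))) (hU : IsOpen U)
    (f : EuclideanSpace ℝ (Fin m) → EuclideanSpace ℝ (Fin n))
    (hf : ContDiffOn ℝ 1 f U)
    (U' : Set (EuclideanSpace ℝ (Fin m)))
    (hU'd : U ⊆ closure U')
    (hsurj : ∀ x ∈ U', Function.Surjective (fderiv ℝ f x)) :
    ∀ Z : Set (EuclideanSpace ℝ (Fin n)), Dense Z →
      U ⊆ closure (U ∩ f ⁻¹' Z) := by
  intro Z hZ
  refine hU.subset_closure_inter_preimage hU'd (fun x hx => ?_) hZ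
  have hfx : ContDiffAt ℝ 1 f x := hf.contDiffAt (hU.mem_nhds hx.1)
  exact (hfx.map_nhds_eq_of_surjective one_ne_zero (hsurj x hx.2)).ge

/-- If `f` is `C¹` on an open set `U ⊆ ℝ^m` and its derivative is
surjective at every point of a dense open subset `U' ⊆ U`, then for every dense
`Z ⊆ ℝ^n` the set `U ∩ f⁻¹(Z)` is dense in `U`. -/
theorem stmt_6 (m n : ℕ) (U : Set (EuclideanSpace ℝ (Fin m))) (hU : IsOpen U)
    (f : EuclideanSpace ℝ (Fin m) → EuclideanSpace ℝ (Fin n))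
    (hf : ContDiffOn ℝ 1 f U)
    (U' : Set (EuclideanSpace ℝ (Fin m))) (hU'o : IsOpen U') (hU'U : U' ⊆ U)
    (hU'd : U ⊆ closure U')
    (hsurj : ∀ x ∈ U', Function.Surjective (fderiv ℝ f x)) :
    ∀ Z : Set (EuclideanSpace ℝ (Fin n)), Dense Z →
      U ⊆ closure (U ∩ f ⁻¹' Z) :=
  stmt_6_general m n U hU f hf U' hU'd hsurj
end

section
/- Let U ⊆ ℝ^m be a connected open set and let f : ℝ^m → ℝ^n be real-analytic on a neighbourhood of U. If the derivative of f is surjective at some point of U, then the set of points x ∈ U at which the derivative of f is surjective is open and dense in U. -/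
/-!
In bases, the derivative of `f` at `x` is a matrix `A x` whose entries are analytic in `x`, and
it is surjective iff the Gram determinant `det (A x * (A x)ᵀ)` is nonzero. This determinant is
analytic on `U` and nonzero somewhere, so by the identity theorem it vanishes on no nonempty open
subset of the connected set `U`: its nonvanishing locus is open and dense in `U`.
-/

open Function Filter Topology Module Matrix

namespace Matrix

variable {K : Type*} [Field K] {m n : Type*} [Fintype m] [Fintype n]

theorem mulVec_surjective_iff_rank_eq_card {A : Matrix m n K} :
    Surjective A.mulVec ↔ A.rank = Fintype.card m := by
  rw [rank, ← Module.finrank_fintype_fun_eq_card (R := K), ← Submodule.eq_top_iff_finrank_eq,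
    LinearMap.range_eq_top]
  rfl

variable [DecidableEq m]

theorem det_ne_zero_iff_rank_eq_card {A : Matrix m m K} :
    A.det ≠ 0 ↔ A.rank = Fintype.card m := by
  rw [← mulVec_surjective_iff_rank_eq_card, mulVec_surjective_iff_isUnit, isUnit_iff_isUnit_det,
    isUnit_iff_ne_zero]

theorem det_mul_transpose_ne_zero_iff [LinearOrder K] [IsStrictOrderedRing K] {A : Matrix m n K} :
    (A * Aᵀ).det ≠ 0 ↔ A.rank = Fintype.card m := by
  rw [det_ne_zero_iff_rank_eq_card, rank_self_mul_transpose]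

end Matrix

namespace LinearMap

variable {K M N ι κ : Type*} [Field K] [AddCommGroup M] [Module K M] [AddCommGroup N] [Module K N]
  [Fintype ι] [Fintype κ] [DecidableEq κ]

theorem rank_toMatrix (b : Basis κ K M) (c : Basis ι K N) (f : M →ₗ[K] N) :
    (toMatrix b c f).rank = finrank K (range f) := by
  rw [Matrix.rank_eq_finrank_range_toLin _ c b, Matrix.toLin_toMatrix]

theorem surjective_iff_det_toMatrix_mul_transpose_ne_zero [LinearOrder K] [IsStrictOrderedRing K]
    [DecidableEq ι] (b : Basis κ K M) (c : Basis ι K N) (f : M →ₗ[K] N) :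
    Surjective f ↔ (toMatrix b c f * (toMatrix b c f)ᵀ).det ≠ 0 := by
  have := Module.Finite.of_basis c
  rw [Matrix.det_mul_transpose_ne_zero_iff, rank_toMatrix, ← finrank_eq_card_basis c,
    ← Submodule.eq_top_iff_finrank_eq, range_eq_top]

end LinearMap

namespace AnalyticOnNhd

variable {𝕜 E : Type*} [NontriviallyNormedField 𝕜] [NormedAddCommGroup E] [NormedSpace 𝕜 E]
  {s : Set E}

theorem matrix_mul_apply {l m n : Type*} [Fintype m] {M : E → Matrix l m 𝕜}
    {N : E → Matrix m n 𝕜} (hM : ∀ i j, AnalyticOnNhd 𝕜 (fun x => M x i j) s)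
    (hN : ∀ i j, AnalyticOnNhd 𝕜 (fun x => N x i j) s) (i : l) (k : n) :
    AnalyticOnNhd 𝕜 (fun x => (M x * N x) i k) s := by
  simp only [Matrix.mul_apply]
  exact Finset.analyticOnNhd_fun_sum _ fun j _ => (hM i j).mul (hN j k)

theorem matrix_det {n : Type*} [Fintype n] [DecidableEq n] {M : E → Matrix n n 𝕜}
    (hM : ∀ i j, AnalyticOnNhd 𝕜 (fun x => M x i j) s) :
    AnalyticOnNhd 𝕜 (fun x => (M x).det) s := by
  simp only [Matrix.det_apply']
  exact Finset.analyticOnNhd_fun_sum _ fun σ _ =>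
    analyticOnNhd_const.mul (Finset.analyticOnNhd_fun_prod _ fun i _ => hM (σ i) i)

theorem toMatrix_apply [CompleteSpace 𝕜] {F G ι κ : Type*} [NormedAddCommGroup F]
    [NormedSpace 𝕜 F] [NormedAddCommGroup G] [NormedSpace 𝕜 G] [FiniteDimensional 𝕜 G]
    [Fintype ι] [Fintype κ] [DecidableEq κ] {φ : E → F →L[𝕜] G} (hφ : AnalyticOnNhd 𝕜 φ s)
    (b : Basis κ 𝕜 F) (c : Basis ι 𝕜 G) (i : ι) (j : κ) :
    AnalyticOnNhd 𝕜 (fun x => LinearMap.toMatrix b c (φ x) i j) s := by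
  simp only [LinearMap.toMatrix_apply]
  exact (LinearMap.toContinuousLinearMap (c.coord i) ∘L
    ContinuousLinearMap.apply 𝕜 G (b j)).comp_analyticOnNhd hφ

theorem isOpen_and_subset_closure_setOf_ne_zero {F : Type*} [NormedAddCommGroup F]
    [NormedSpace 𝕜 F] {g : E → F} (hg : AnalyticOnNhd 𝕜 g s) (hso : IsOpen s)
    (hs : IsPreconnected s) {x₀ : E} (hx₀ : x₀ ∈ s) (hgx₀ : g x₀ ≠ 0) :
    IsOpen {x | x ∈ s ∧ g x ≠ 0} ∧ s ⊆ closure {x | x ∈ s ∧ g x ≠ 0} := by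
  refine ⟨hg.continuousOn.isOpen_inter_preimage hso isOpen_compl_singleton, fun y hy => ?_⟩
  by_contra hy'
  rw [mem_closure_iff_frequently, not_frequently] at hy'
  have hzero : g =ᶠ[𝓝 y] 0 := by
    filter_upwards [hy', hso.mem_nhds hy] with z hz hzs
    simpa [hzs] using hz
  exact hgx₀ (hg.eqOn_zero_of_preconnected_of_eventuallyEq_zero hs hy hzero hx₀)

end AnalyticOnNhd

theorem AnalyticOnNhd.isOpen_and_subset_closure_setOf_surjective_fderiv {E F : Type*}
    [NormedAddCommGroup E] [NormedSpace ℝ E] [FiniteDimensional ℝ E] [NormedAddCommGroup F]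
    [NormedSpace ℝ F] [FiniteDimensional ℝ F] {f : E → F} {U : Set E}
    (hf : AnalyticOnNhd ℝ f U) (hUo : IsOpen U) (hU : IsPreconnected U)
    (hx : ∃ x ∈ U, Surjective (fderiv ℝ f x)) :
    IsOpen {x | x ∈ U ∧ Surjective (fderiv ℝ f x)} ∧
      U ⊆ closure {x | x ∈ U ∧ Surjective (fderiv ℝ f x)} := by
  let b := finBasis ℝ E
  let c := finBasis ℝ F
  let A : E → Matrix (Fin (finrank ℝ F)) (Fin (finrank ℝ E)) ℝ := fun x =>
    LinearMap.toMatrix b c (fderiv ℝ f x)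
  have hsurj (x : E) : Surjective (fderiv ℝ f x) ↔ (A x * (A x)ᵀ).det ≠ 0 :=
    LinearMap.surjective_iff_det_toMatrix_mul_transpose_ne_zero b c _
  have hA (i j) : AnalyticOnNhd ℝ (fun x => A x i j) U := hf.fderiv.toMatrix_apply b c i j
  have hdet : AnalyticOnNhd ℝ (fun x => (A x * (A x)ᵀ).det) U :=
    matrix_det (matrix_mul_apply hA fun i j => hA j i)
  obtain ⟨x₀, hx₀, hx₀surj⟩ := hx
  simp only [hsurj] at hx₀surj ⊢
  exact hdet.isOpen_and_subset_closure_setOf_ne_zero hUo hU hx₀ hx₀surj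

/-- If `f` is real-analytic on a connected open set `U ⊆ ℝ^m` and
its derivative is surjective at some point of `U`, then the set of points of
`U` where the derivative is surjective is open and dense in `U`. -/
theorem stmt_7 (m n : ℕ) (U : Set (EuclideanSpace ℝ (Fin m)))
    (hUo : IsOpen U) (hUc : IsConnected U)
    (f : EuclideanSpace ℝ (Fin m) → EuclideanSpace ℝ (Fin n))
    (hf : AnalyticOnNhd ℝ f U)
    (hx : ∃ x ∈ U, Function.Surjective (fderiv ℝ f x)) :
    IsOpen {x | x ∈ U ∧ Function.Surjective (fderiv ℝ f x)} ∧
      U ⊆ closure {x | x ∈ U ∧ Function.Surjective (fderiv ℝ f x)} :=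
  hf.isOpen_and_subset_closure_setOf_surjective_fderiv hUo hUc.isPreconnected hx
end

section
/- Fix n ≥ 1 and a natural number k. The set of coefficient vectors s = (s₀, …, s_{n−1}) ∈ ℝ^n such that the monic polynomial f_s(x) = x^n + s_{n−1}x^{n−1} + ⋯ + s₁x + s₀ is separable (has no multiple complex root) and has exactly k real roots is an open subset of ℝ^n. -/
/-!
Near a simple real root of `f`, every nearby polynomial has nonzero derivative on a small
interval around it and takes values of opposite signs at its ends, so by the intermediate value
theorem and Rolle it has exactly one root there. Outside these intervals `f` has no zero on a
compact set, which by the Cauchy bound contains every real root of every nearby monic polynomial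
of the same degree, so no further roots appear. The same compactness argument over `ℂ`, applied
to the pair `(f, f')`, shows that separability is an open condition.
-/

open Polynomial

/-- The monic polynomial `x^n + s_{n-1} x^{n-1} + ⋯ + s₁ x + s₀` attached to a
coefficient vector `s ∈ ℝ^n`. -/
noncomputable def monicPolyOfCoeffs (n : ℕ) (s : Fin n → ℝ) : Polynomial ℝ :=
  X ^ n + ∑ i : Fin n, C (s i) * X ^ (i : ℕ)

open Filter Topology Set Metric

theorem IsCompact.eventually_forall_apply_ne {X Y E : Type*} [TopologicalSpace X]
    [TopologicalSpace Y] [TopologicalSpace E] [T1Space E] {F : X × Y → E} (hF : Continuous F)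
    {K : Set Y} (hK : IsCompact K) {x₀ : X} {e : E} (h : ∀ y ∈ K, F (x₀, y) ≠ e) :
    ∀ᶠ x in 𝓝 x₀, ∀ y ∈ K, F (x, y) ≠ e :=
  hK.eventually_forall_of_forall_eventually fun y hy => hF.continuousAt.eventually_ne (h y hy)

theorem Set.ncard_eq_of_existsUnique_mem {α β : Type*} {T : Set α} {Z : Set β} {I : β → Set α}
    (hcover : T ⊆ ⋃ x ∈ Z, I x) (hdisj : Z.PairwiseDisjoint I)
    (hunique : ∀ x ∈ Z, ∃! y, y ∈ I x ∧ y ∈ T) : T.ncard = Z.ncard := by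
  choose y hy hy_unique using hunique
  refine (Set.ncard_congr y (fun x hx => (hy x hx).2) (fun a b ha hb hab => ?_) fun t ht => ?_).symm
  · exact hdisj.elim_set ha hb _ (hy a ha).1 (hab ▸ (hy b hb).1)
  · obtain ⟨x, hx, htx⟩ := mem_iUnion₂.1 (hcover ht)
    exact ⟨x, hx, (hy_unique x hx t ⟨htx, ht⟩).symm⟩

theorem Set.Finite.eventually_pairwiseDisjoint_closedBall {α : Type*} [MetricSpace α] {Z : Set α}
    (hZ : Z.Finite) : ∀ᶠ δ in 𝓝 (0 : ℝ), Z.PairwiseDisjoint (closedBall · δ) := by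
  have h : ∀ x ∈ Z, ∀ y ∈ Z, ∀ᶠ δ in 𝓝 (0 : ℝ), x ≠ y →
      Disjoint (closedBall x δ) (closedBall y δ) := by
    intro x _ y _
    by_cases hxy : x = y
    · exact Eventually.of_forall fun _ h => absurd hxy h
    · filter_upwards [gt_mem_nhds (half_pos (dist_pos.2 hxy))] with δ hδ _
      exact closedBall_disjoint_closedBall (by linarith)
  filter_upwards [(hZ.eventually_all).2 fun x hx => (hZ.eventually_all).2 (h x hx)]
    with δ hδ x hx y hy hxy using hδ x hx y hy hxy

theorem Polynomial.injOn_eval_of_derivative_ne_zero (p : ℝ[X]) {s : Set ℝ} (hs : s.OrdConnected)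
    (h : ∀ u ∈ s, p.derivative.eval u ≠ 0) : InjOn (fun u => p.eval u) s := by
  intro a ha b hb hab
  by_contra hne
  wlog hlt : a < b generalizing a b
  · exact this hb ha hab.symm (Ne.symm hne) ((Ne.symm hne).lt_of_le (not_lt.1 hlt))
  obtain ⟨c, hc, hc0⟩ := exists_deriv_eq_zero hlt p.continuous.continuousOn hab
  exact h c (hs.out ha hb (Ioo_subset_Icc_self hc)) (by rwa [Polynomial.deriv] at hc0)

theorem ContinuousOn.mul_neg_of_injOn_Icc {f : ℝ → ℝ} {a b c : ℝ} (hf : ContinuousOn f (Icc a b))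
    (hinj : InjOn f (Icc a b)) (hc : c ∈ Ioo a b) (hfc : f c = 0) : f a * f b < 0 := by
  have hac : a ∈ Icc a b := left_mem_Icc.2 (hc.1.trans hc.2).le
  have hbc : b ∈ Icc a b := right_mem_Icc.2 (hc.1.trans hc.2).le
  have hcc : c ∈ Icc a b := Ioo_subset_Icc_self hc
  rcases hf.strictMonoOn_of_injOn_Icc' (hc.1.trans hc.2).le hinj with hmono | hanti
  · exact mul_neg_of_neg_of_pos (hfc ▸ hmono hac hcc hc.1) (hfc ▸ hmono hcc hbc hc.2)
  · exact mul_neg_of_pos_of_neg (hfc ▸ hanti hac hcc hc.1) (hfc ▸ hanti hcc hbc hc.2)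

theorem ContinuousOn.exists_eq_zero_of_mul_neg {f : ℝ → ℝ} {a b : ℝ} (hab : a ≤ b)
    (hf : ContinuousOn f (Icc a b)) (h : f a * f b < 0) : ∃ c ∈ Icc a b, f c = 0 := by
  rcases mul_neg_iff.1 h with ⟨ha, hb⟩ | ⟨ha, hb⟩
  · exact intermediate_value_Icc' hab hf ⟨hb.le, ha.le⟩
  · exact intermediate_value_Icc hab hf ⟨ha.le, hb.le⟩

theorem Polynomial.Monic.norm_lt_of_isRoot {K : Type*} [NormedDivisionRing K] {p : K[X]}
    (hp : p.Monic) {a : K} (ha : p.IsRoot a) :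
    ‖a‖ < 1 + ∑ i ∈ Finset.range p.natDegree, ‖p.coeff i‖ := by
  have hbound := ha.norm_lt_cauchyBound hp.ne_zero
  have hsup : (Finset.range p.natDegree).sup (‖p.coeff ·‖₊) ≤
      ∑ i ∈ Finset.range p.natDegree, ‖p.coeff i‖₊ :=
    Finset.sup_le fun i hi => Finset.single_le_sum (f := (‖p.coeff ·‖₊)) (fun _ _ => zero_le) hi
  rw [cauchyBound, hp.leadingCoeff, nnnorm_one, div_one] at hbound
  have := hbound.trans_le (add_le_add_left hsup 1)
  rw [← NNReal.coe_lt_coe] at this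
  push_cast at this
  linarith

section Family

variable {X : Type*} [TopologicalSpace X] {p : X → ℝ[X]}

theorem continuous_aeval_of_continuous_coeff {A : Type*} [NormedRing A] [NormedAlgebra ℝ A]
    {N : ℕ} (hdeg : ∀ x, (p x).natDegree ≤ N) (hcoeff : ∀ i, Continuous fun x => (p x).coeff i) :
    Continuous fun q : X × A => aeval q.2 (p q.1) := by
  simp only [fun q : X × A => aeval_eq_sum_range' (Nat.lt_succ_of_le (hdeg q.1)) q.2]
  exact continuous_finsetSum _ fun i _ =>
    ((hcoeff i).comp continuous_fst).smul (continuous_snd.pow i)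

theorem continuous_coeff_derivative (hcoeff : ∀ i, Continuous fun x => (p x).coeff i) (i : ℕ) :
    Continuous fun x => (p x).derivative.coeff i := by
  simp only [coeff_derivative]
  exact (hcoeff (i + 1)).mul continuous_const

theorem eventually_norm_le_of_aeval_eq_zero {𝕜 : Type*} [NormedField 𝕜] [NormedAlgebra ℝ 𝕜]
    {N : ℕ} (hmonic : ∀ x, (p x).Monic) (hdeg : ∀ x, (p x).natDegree = N)
    (hcoeff : ∀ i, Continuous fun x => (p x).coeff i) (x₀ : X) :
    ∃ R, ∀ᶠ x in 𝓝 x₀, ∀ z : 𝕜, aeval z (p x) = 0 → ‖z‖ ≤ R := by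
  set S : X → ℝ := fun x => ∑ i ∈ Finset.range N, ‖(p x).coeff i‖
  have hS : Continuous S := continuous_finsetSum _ fun i _ => (hcoeff i).norm
  refine ⟨2 + S x₀, ?_⟩
  filter_upwards [hS.continuousAt.eventually_lt continuousAt_const (lt_add_one (S x₀))]
    with x hx z hz
  have hroot : ((p x).map (algebraMap ℝ 𝕜)).IsRoot z := by rwa [IsRoot, eval_map_algebraMap]
  have := ((hmonic x).map (algebraMap ℝ 𝕜)).norm_lt_of_isRoot hroot
  simp only [natDegree_map, coeff_map, norm_algebraMap', hdeg] at this
  linarith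

theorem eventually_separable {x₀ : X} {R : ℝ}
    (hcont : Continuous fun q : X × ℂ => aeval q.2 (p q.1))
    (hcont' : Continuous fun q : X × ℂ => aeval q.2 (p q.1).derivative)
    (hbound : ∀ᶠ x in 𝓝 x₀, ∀ z : ℂ, aeval z (p x) = 0 → ‖z‖ ≤ R) (hsep : (p x₀).Separable) :
    ∀ᶠ x in 𝓝 x₀, (p x).Separable := by
  have hne : ∀ z ∈ closedBall (0 : ℂ) R,
      (aeval z (p x₀), aeval z (p x₀).derivative) ≠ 0 := fun z _ h =>
    hsep.aeval_derivative_ne_zero (Prod.ext_iff.1 h).1 (Prod.ext_iff.1 h).2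
  filter_upwards [hbound, (isCompact_closedBall 0 R).eventually_forall_apply_ne
    (hcont.prodMk hcont') hne] with x hx hx'
  rw [separable_def, isCoprime_iff_aeval_ne_zero_of_isAlgClosed ℝ ℂ]
  intro z
  by_contra! h
  exact hx' z (mem_closedBall_zero_iff.2 (hx z h.1)) (Prod.ext h.1 h.2)

theorem eventually_existsUnique_root_mem_closedBall {x₀ : X}
    (hcont : Continuous fun q : X × ℝ => (p q.1).eval q.2)
    (hcont' : Continuous fun q : X × ℝ => (p q.1).derivative.eval q.2) {x : ℝ}
    (hroot : (p x₀).eval x = 0) (hsimple : (p x₀).derivative.eval x ≠ 0) :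
    ∀ᶠ δ in 𝓝[>] 0, ∀ᶠ s in 𝓝 x₀, ∃! y, y ∈ closedBall x δ ∧ (p s).eval y = 0 := by
  have hderiv : ∀ᶠ δ in 𝓝 (0 : ℝ), closedBall x δ ⊆ {u | (p x₀).derivative.eval u ≠ 0} :=
    eventually_closedBall_subset ((p x₀).derivative.continuous.continuousAt.eventually_ne hsimple)
  filter_upwards [nhdsWithin_le_nhds hderiv, self_mem_nhdsWithin] with δ hδ (hδpos : 0 < δ)
  rw [Real.closedBall_eq_Icc] at hδ ⊢
  have hsign : (p x₀).eval (x - δ) * (p x₀).eval (x + δ) < 0 :=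
    (p x₀).continuous.continuousOn.mul_neg_of_injOn_Icc
      ((p x₀).injOn_eval_of_derivative_ne_zero ordConnected_Icc hδ)
      ⟨by linarith, by linarith⟩ hroot
  have hsign_near : ∀ᶠ s in 𝓝 x₀, (p s).eval (x - δ) * (p s).eval (x + δ) < 0 :=
    ((hcont.comp (Continuous.prodMk_left _)).mul
      (hcont.comp (Continuous.prodMk_left _))).continuousAt.eventually_lt continuousAt_const hsign
  filter_upwards [hsign_near, isCompact_Icc.eventually_forall_apply_ne hcont' hδ]
    with s hs hs'
  obtain ⟨y, hy, hy0⟩ := (p s).continuous.continuousOn.exists_eq_zero_of_mul_neg (by linarith) hs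
  exact ⟨y, ⟨hy, hy0⟩, fun z hz =>
    (p s).injOn_eval_of_derivative_ne_zero ordConnected_Icc hs' hz.1 hy (hz.2.trans hy0.symm)⟩

theorem eventually_ncard_setOf_eval_eq_zero {x₀ : X} {R : ℝ}
    (hcont : Continuous fun q : X × ℝ => (p q.1).eval q.2)
    (hcont' : Continuous fun q : X × ℝ => (p q.1).derivative.eval q.2)
    (hbound : ∀ᶠ x in 𝓝 x₀, ∀ y : ℝ, (p x).eval y = 0 → ‖y‖ ≤ R) (hsep : (p x₀).Separable) :
    ∀ᶠ x in 𝓝 x₀, {y | (p x).eval y = 0}.ncard = {y | (p x₀).eval y = 0}.ncard := by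
  set Z := {y | (p x₀).eval y = 0}
  have hZ : Z.Finite := finite_setOfPred_isRoot hsep.ne_zero
  have hlocal : ∀ᶠ δ in 𝓝[>] (0 : ℝ), ∀ x ∈ Z,
      ∀ᶠ s in 𝓝 x₀, ∃! y, y ∈ closedBall x δ ∧ (p s).eval y = 0 :=
    hZ.eventually_all.2 fun x hx => eventually_existsUnique_root_mem_closedBall hcont hcont' hx
      (hsep.eval₂_derivative_ne_zero (RingHom.id ℝ) hx)
  have hdisj : ∀ᶠ δ in 𝓝[>] (0 : ℝ), Z.PairwiseDisjoint (closedBall · δ) :=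
    nhdsWithin_le_nhds hZ.eventually_pairwiseDisjoint_closedBall
  obtain ⟨δ, hunique, hdisj, hδpos⟩ := (hlocal.and (hdisj.and self_mem_nhdsWithin)).exists
  have hK : IsCompact (closedBall (0 : ℝ) R \ ⋃ x ∈ Z, ball x δ) :=
    (isCompact_closedBall 0 R).diff (isOpen_biUnion fun _ _ => isOpen_ball)
  have hKroot : ∀ y ∈ closedBall (0 : ℝ) R \ ⋃ x ∈ Z, ball x δ, (p x₀).eval y ≠ 0 :=
    fun y hy h0 => hy.2 (mem_iUnion₂.2 ⟨y, h0, mem_ball_self (hδpos : 0 < δ)⟩)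
  filter_upwards [hbound, hK.eventually_forall_apply_ne hcont hKroot, hZ.eventually_all.2 hunique]
    with s hs hsK hsunique
  refine ncard_eq_of_existsUnique_mem (fun y hy => ?_) hdisj hsunique
  by_contra hy'
  exact hsK y ⟨mem_closedBall_zero_iff.2 (hs y hy),
    fun h => hy' (biUnion_mono subset_rfl (fun x _ => ball_subset_closedBall) h)⟩ hy


theorem isOpen_setOf_separable_and_ncard_eq {N : ℕ} (hmonic : ∀ x, (p x).Monic)
    (hdeg : ∀ x, (p x).natDegree = N) (hcoeff : ∀ i, Continuous fun x => (p x).coeff i) (k : ℕ) :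
    IsOpen {x | (p x).Separable ∧ {y : ℝ | (p x).eval y = 0}.ncard = k} := by
  have hdeg' : ∀ x, (p x).derivative.natDegree ≤ N :=
    fun x => (natDegree_derivative_le _).trans (hdeg x ▸ Nat.sub_le _ _)
  have hcoeff' := continuous_coeff_derivative hcoeff
  have hcontC := continuous_aeval_of_continuous_coeff (A := ℂ) (hdeg · |>.le) hcoeff
  have hcontC' := continuous_aeval_of_continuous_coeff (A := ℂ) hdeg' hcoeff'
  have hcontR := continuous_aeval_of_continuous_coeff (A := ℝ) (hdeg · |>.le) hcoeff
  have hcontR' := continuous_aeval_of_continuous_coeff (A := ℝ) hdeg' hcoeff'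
  simp only [coe_aeval_eq_eval] at hcontR hcontR'
  rw [isOpen_iff_mem_nhds]
  rintro x₀ ⟨hsep, rfl⟩
  obtain ⟨R, hR⟩ := eventually_norm_le_of_aeval_eq_zero (𝕜 := ℂ) hmonic hdeg hcoeff x₀
  obtain ⟨r, hr⟩ := eventually_norm_le_of_aeval_eq_zero (𝕜 := ℝ) hmonic hdeg hcoeff x₀
  simp only [coe_aeval_eq_eval] at hr
  filter_upwards [eventually_separable hcontC hcontC' hR hsep,
    eventually_ncard_setOf_eval_eq_zero hcontR hcontR' hr hsep] with x hx hx'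
  exact ⟨hx, hx'⟩

end Family

theorem monic_monicPolyOfCoeffs (n : ℕ) (s : Fin n → ℝ) : (monicPolyOfCoeffs n s).Monic :=
  monic_X_pow_add (degree_sum_fin_lt s)

theorem natDegree_monicPolyOfCoeffs (n : ℕ) (s : Fin n → ℝ) :
    (monicPolyOfCoeffs n s).natDegree = n := by
  rw [monicPolyOfCoeffs, natDegree_add_eq_left_of_degree_lt, natDegree_X_pow]
  simpa only [degree_X_pow] using degree_sum_fin_lt s

theorem continuous_coeff_monicPolyOfCoeffs (n j : ℕ) :
    Continuous fun s : Fin n → ℝ => (monicPolyOfCoeffs n s).coeff j := by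
  simp only [monicPolyOfCoeffs, coeff_add, finsetSum_coeff, coeff_C_mul]
  fun_prop

theorem stmt_8_general (n k : ℕ) :
    IsOpen {s : Fin n → ℝ |
      (monicPolyOfCoeffs n s).Separable ∧
      {x : ℝ | Polynomial.eval x (monicPolyOfCoeffs n s) = 0}.ncard = k} :=
  isOpen_setOf_separable_and_ncard_eq (monic_monicPolyOfCoeffs n) (natDegree_monicPolyOfCoeffs n)
    (continuous_coeff_monicPolyOfCoeffs n) k

/-- the set of `s ∈ ℝ^n` such that `f_s` is separable and has
exactly `k` real roots is open. -/
theorem stmt_8 (n k : ℕ) (hn : 1 ≤ n) :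
    IsOpen {s : Fin n → ℝ |
      (monicPolyOfCoeffs n s).Separable ∧
      {x : ℝ | Polynomial.eval x (monicPolyOfCoeffs n s) = 0}.ncard = k} :=
  stmt_8_general n k
end

section
/- Let W be a 3-dimensional complex linear subspace of the space of symmetric 3×3 matrices with complex entries containing an invertible matrix. Then there exist matrices M₁, M₂, M₃ ∈ W such that every element of W of rank one is a scalar multiple of M₁, M₂ or M₃. In particular, the set of rank-one elements of W, up to scalar, is finite of cardinality at most three. -/
/-!
Over ℂ a symmetric matrix of rank one is a square `u uᵀ`. If `u₀, u₁, u₂` are pairwise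
non-proportional and their squares lie in `W`, these squares are linearly independent, hence
span `W`. If the `uᵢ` form a basis, `W` consists of the matrices that are diagonal in that
basis, and a square `v vᵀ` can only be diagonal there when `v` is proportional to a basis
vector. Otherwise the `uᵢ` are coplanar, and a nonzero vector orthogonal to them lies in the
kernel of every element of `W`, which is impossible since `W` contains an invertible matrix.
So there are no four pairwise non-proportional double lines in `W`, and rank-one elements chosen
greedily give `M₁, M₂, M₃`.
-/

open Matrix

namespace Matrix

theorem vecMulVec_smul_self {K n : Type*} [CommMonoid K] (c : K) (u : n → K) :
    vecMulVec (c • u) (c • u) = (c * c) • vecMulVec u u := by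
  rw [smul_vecMulVec, vecMulVec_smul, smul_smul]

section CommSemiring

variable {R m n : Type*} [CommSemiring R]

theorem transpose_mul_mul_mul_of_mul_eq_one [Fintype m] [Fintype n] [DecidableEq m]
    {B : Matrix m n R} {Y : Matrix n m R} (h : B * Y = 1) (X : Matrix m m R) :
    Yᵀ * (Bᵀ * X * B) * Y = X := by
  calc Yᵀ * (Bᵀ * X * B) * Y = (B * Y)ᵀ * X * (B * Y) := by
        simp only [transpose_mul, Matrix.mul_assoc]
    _ = X := by rw [h, transpose_one, Matrix.one_mul, Matrix.mul_one]

theorem sum_smul_vecMulVec_self [Fintype m] [DecidableEq m] (b : m → n → R) (g : m → R) :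
    ∑ i, g i • vecMulVec (b i) (b i) = (of b)ᵀ * diagonal g * of b := by
  ext k l
  simp [sum_apply, mul_apply, vecMulVec_apply, diagonal, mul_comm, mul_left_comm]

theorem mulVec_eq_zero_of_mem_span_vecMulVec_self [Fintype m] [Fintype n] [DecidableEq m]
    {b : m → n → R} {x : n → R} (hx : of b *ᵥ x = 0) {A : Matrix n n R}
    (hA : A ∈ Submodule.span R (Set.range fun i => vecMulVec (b i) (b i))) : A *ᵥ x = 0 := by
  obtain ⟨g, rfl⟩ := (Submodule.mem_span_range_iff_exists_fun R).1 hA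
  rw [sum_smul_vecMulVec_self, ← mulVec_mulVec, hx, mulVec_zero]

end CommSemiring

variable {K m n : Type*} [Field K]

theorem exists_eq_vecMulVec_of_rank_le_one [Fintype m] [Fintype n] {A : Matrix m n K}
    (hA : A.rank ≤ 1) :
    ∃ u : m → K, ∃ v : n → K, A = vecMulVec u v := by
  rw [rank_eq_finrank_span_cols, Submodule.finrank_le_one_iff_isPrincipal] at hA
  obtain ⟨u, hu⟩ := hA.principal
  have hcol : ∀ j, ∃ c : K, c • u = A.col j := fun j =>
    Submodule.mem_span_singleton.1 (hu ▸ Submodule.subset_span ⟨j, rfl⟩)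
  choose v hv using hcol
  exact ⟨u, v, ext fun i j => (congr_fun (hv j) i).symm.trans (mul_comm _ _)⟩

theorem exists_vecMulVec_eq_smul_vecMulVec_self {u v : n → K} (h : (vecMulVec u v).IsSymm) :
    ∃ c : K, vecMulVec u v = c • vecMulVec u u := by
  rcases eq_or_ne u 0 with rfl | hu
  · exact ⟨0, by simp⟩
  obtain ⟨k, hk⟩ : ∃ k, u k ≠ 0 := Function.ne_iff.1 hu
  refine ⟨v k / u k, ext fun i j => ?_⟩
  have hjk : u j * v k = u k * v j := by
    simpa [vecMulVec_apply] using congr_fun (congr_fun h k) j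
  simp only [vecMulVec_apply, smul_apply, smul_eq_mul]
  field_simp
  linear_combination u i * hjk.symm

theorem IsSymm.exists_eq_vecMulVec_self [Fintype n] [IsAlgClosed K] {A : Matrix n n K}
    (hA : A.IsSymm) (hr : A.rank ≤ 1) : ∃ u : n → K, A = vecMulVec u u := by
  obtain ⟨u, v, rfl⟩ := exists_eq_vecMulVec_of_rank_le_one hr
  obtain ⟨c, hc⟩ := exists_vecMulVec_eq_smul_vecMulVec_self hA
  obtain ⟨s, rfl⟩ := IsAlgClosed.exists_eq_mul_self c
  exact ⟨s • u, by rw [hc, vecMulVec_smul_self]⟩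

theorem exists_mul_eq_one_of_linearIndependent_row [Fintype m] [Fintype n] [DecidableEq m]
    {B : Matrix m n K} (hB : LinearIndependent K B.row) : ∃ Y : Matrix n m K, B * Y = 1 := by
  rw [← mulVec_surjective_iff_exists_right_inverse, ← coe_mulVecLin, ← LinearMap.range_eq_top]
  apply Submodule.eq_top_of_finrank_eq
  rw [← rank, hB.rank_matrix, Module.finrank_fintype_fun_eq_card]

theorem eq_single_of_vecMulVec_self_eq_diagonal [DecidableEq n] {w g : n → K}
    (h : vecMulVec w w = diagonal g) {k : n} (hk : w k ≠ 0) : w = Pi.single k (w k) := by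
  ext j
  rcases eq_or_ne j k with rfl | hjk
  · simp
  have hkj := congr_fun (congr_fun h k) j
  rw [vecMulVec_apply, diagonal_apply_ne _ hjk.symm] at hkj
  simpa [hjk, hk] using hkj

theorem linearIndependent_vecMulVec_self [Fintype m] [Fintype n] [DecidableEq m]
    {b : m → n → K} (hb : LinearIndependent K b) :
    LinearIndependent K fun i => vecMulVec (b i) (b i) := by
  obtain ⟨Y, hY⟩ := exists_mul_eq_one_of_linearIndependent_row (B := of b) hb
  refine Fintype.linearIndependent_iff.2 fun g hg => ?_
  have hD := transpose_mul_mul_mul_of_mul_eq_one hY (diagonal g)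
  rw [← sum_smul_vecMulVec_self, hg, Matrix.mul_zero, Matrix.zero_mul, eq_comm,
    diagonal_eq_zero] at hD
  exact congr_fun hD

theorem exists_eq_smul_of_vecMulVec_self_mem_span [Fintype m] [Fintype n] [DecidableEq m]
    [Nonempty m] {b : m → n → K} (hb : LinearIndependent K b) {v : n → K}
    (hv : vecMulVec v v ∈ Submodule.span K (Set.range fun i => vecMulVec (b i) (b i))) :
    ∃ i, ∃ c : K, v = c • b i := by
  rcases eq_or_ne v 0 with rfl | hv0
  · exact ⟨Classical.arbitrary m, 0, by simp⟩
  obtain ⟨g, hg⟩ := (Submodule.mem_span_range_iff_exists_fun K).1 hv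
  rw [sum_smul_vecMulVec_self] at hg
  obtain ⟨Y, hY⟩ := exists_mul_eq_one_of_linearIndependent_row (B := of b) hb
  -- the coordinates of `v` with respect to `b`, once `v` is known to lie in their span
  set w := v ᵥ* Y
  have hw : vecMulVec w w = diagonal g := by
    rw [← transpose_mul_mul_mul_of_mul_eq_one hY (diagonal g), hg, mul_vecMulVec, vecMulVec_mul,
      mulVec_transpose]
  have hvw : vecMulVec v w = vecMulVec (w ᵥ* of b) w := by
    rw [← vecMulVec_mul, ← hg, Matrix.mul_assoc, hY, Matrix.mul_one, ← hw, mul_vecMulVec,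
      mulVec_transpose]
  obtain ⟨k, hk⟩ : ∃ k, w k ≠ 0 := by
    by_contra! hw0
    rw [show w = 0 from funext hw0, vecMulVec_zero, eq_comm, diagonal_eq_zero] at hw
    rw [hw, diagonal_zero', Matrix.mul_zero, Matrix.zero_mul, eq_comm, vecMulVec_eq_zero,
      or_self] at hg
    exact hv0 hg
  refine ⟨k, w k, funext fun i => mul_right_cancel₀ hk ?_⟩
  rw [← vecMulVec_apply, hvw, eq_single_of_vecMulVec_self_eq_diagonal hw hk, single_vecMul]
  simp [vecMulVec_apply]

end Matrix

theorem exists_eq_smul_of_vecMulVec_self_mem {K : Type*} [Field K]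
    {W : Submodule K (Matrix (Fin 3) (Fin 3) K)} (hdim : Module.finrank K W = 3)
    (hunit : ∃ A ∈ W, IsUnit A) {u₀ u₁ u₂ v : Fin 3 → K} (h₀ : u₀ ≠ 0)
    (h₁ : ∀ c : K, u₁ ≠ c • u₀) (h₂ : ∀ c : K, u₂ ≠ c • u₀ ∧ u₂ ≠ c • u₁)
    (hu₀ : vecMulVec u₀ u₀ ∈ W) (hu₁ : vecMulVec u₁ u₁ ∈ W) (hu₂ : vecMulVec u₂ u₂ ∈ W)
    (hv : vecMulVec v v ∈ W) :
    ∃ c : K, v = c • u₀ ∨ v = c • u₁ ∨ v = c • u₂ := by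
  set b : Fin 3 → Fin 3 → K := ![u₀, u₁, u₂]
  have h01 : LinearIndependent K ![u₀, u₁] :=
    (LinearIndependent.pair_iff' h₀).2 fun c hc => h₁ c hc.symm
  have hsq : LinearIndependent K fun i => vecMulVec (b i) (b i) := by
    have hinit : Fin.init (fun i => vecMulVec (b i) (b i)) =
        fun i => vecMulVec (![u₀, u₁] i) (![u₀, u₁] i) := by
      ext i : 1
      fin_cases i <;> rfl
    rw [linearIndependent_finSucc', hinit]
    refine ⟨linearIndependent_vecMulVec_self h01, fun h => ?_⟩
    obtain ⟨i, c, hc⟩ := exists_eq_smul_of_vecMulVec_self_mem_span h01 h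
    fin_cases i
    exacts [(h₂ c).1 hc, (h₂ c).2 hc]
  have hspan : Submodule.span K (Set.range fun i => vecMulVec (b i) (b i)) = W := by
    refine Submodule.eq_of_le_of_finrank_eq ?_ ?_
    · refine Submodule.span_le.2 (Set.range_subset_iff.2 fun i => ?_)
      fin_cases i
      exacts [hu₀, hu₁, hu₂]
    · rw [finrank_span_eq_card hsq, hdim, Fintype.card_fin]
  by_cases hb : LinearIndependent K b
  · obtain ⟨i, c, hc⟩ := exists_eq_smul_of_vecMulVec_self_mem_span hb (hspan ▸ hv)
    refine ⟨c, ?_⟩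
    fin_cases i
    exacts [.inl hc, .inr (.inl hc), .inr (.inr hc)]
  · exfalso
    obtain ⟨A, hAW, hA⟩ := hunit
    have hdet : (of b).det = 0 := by
      rw [← not_ne_iff, ← isUnit_iff_ne_zero, ← isUnit_iff_isUnit_det,
        ← linearIndependent_rows_iff_isUnit]
      exact hb
    obtain ⟨x, hx0, hx⟩ := exists_mulVec_eq_zero_iff.2 hdet
    have hAx := mulVec_eq_zero_of_mem_span_vecMulVec_self hx (hspan ▸ hAW)
    exact hx0 (mulVec_injective_iff_isUnit.2 hA (hAx.trans (mulVec_zero A).symm))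

/-- If `W` is a 3-dimensional complex subspace of symmetric 3×3
complex matrices containing an invertible matrix, then there are `M₁, M₂, M₃ ∈ W`
such that every rank-one element of `W` is a scalar multiple of one of them. -/
theorem stmt_9 (W : Submodule ℂ (Matrix (Fin 3) (Fin 3) ℂ))
    (hsymm : ∀ M ∈ W, M.IsSymm)
    (hdim : Module.finrank ℂ W = 3)
    (hunit : ∃ M ∈ W, IsUnit M) :
    ∃ M₁ M₂ M₃ : Matrix (Fin 3) (Fin 3) ℂ,
      M₁ ∈ W ∧ M₂ ∈ W ∧ M₃ ∈ W ∧
      ∀ M ∈ W, M.rank = 1 →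
        ∃ c : ℂ, M = c • M₁ ∨ M = c • M₂ ∨ M = c • M₃ := by
  by_contra! h
  obtain ⟨N₀, hN₀, hr₀, h₀⟩ := h 0 0 0 W.zero_mem W.zero_mem W.zero_mem
  obtain ⟨N₁, hN₁, hr₁, h₁⟩ := h N₀ N₀ N₀ hN₀ hN₀ hN₀
  obtain ⟨N₂, hN₂, hr₂, h₂⟩ := h N₀ N₁ N₁ hN₀ hN₁ hN₁
  obtain ⟨N₃, hN₃, hr₃, h₃⟩ := h N₀ N₁ N₂ hN₀ hN₁ hN₂
  obtain ⟨u₀, rfl⟩ := (hsymm _ hN₀).exists_eq_vecMulVec_self hr₀.le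
  obtain ⟨u₁, rfl⟩ := (hsymm _ hN₁).exists_eq_vecMulVec_self hr₁.le
  obtain ⟨u₂, rfl⟩ := (hsymm _ hN₂).exists_eq_vecMulVec_self hr₂.le
  obtain ⟨u₃, rfl⟩ := (hsymm _ hN₃).exists_eq_vecMulVec_self hr₃.le
  obtain ⟨c, hc⟩ := exists_eq_smul_of_vecMulVec_self_mem hdim hunit
    (fun hu => (h₀ 0).1 (by simp [hu]))
    (fun c hc => (h₁ (c * c)).1 (by rw [hc, vecMulVec_smul_self]))
    (fun c => ⟨fun hc => (h₂ (c * c)).1 (by rw [hc, vecMulVec_smul_self]),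
      fun hc => (h₂ (c * c)).2.1 (by rw [hc, vecMulVec_smul_self])⟩)
    hN₀ hN₁ hN₂ hN₃
  rcases hc with rfl | rfl | rfl
  · exact (h₃ (c * c)).1 (vecMulVec_smul_self c u₀)
  · exact (h₃ (c * c)).2.1 (vecMulVec_smul_self c u₁)
  · exact (h₃ (c * c)).2.2 (vecMulVec_smul_self c u₂)
end

section
/- Let W be the complex linear span, inside symmetric 4×4 complex matrices, of the four matrices corresponding to the quadratic forms x₀², x₀x₁, x₁², x₂x₃ on ℂ⁴ (namely E₀₀, E₀₁+E₁₀, E₁₁, E₂₃+E₃₂, where E_{ij} is the matrix unit). Then W is 4-dimensional, W contains an invertible matrix, and for every vector v ∈ ℂ⁴ there exists M ∈ W with M ≠ 0 and M · v = 0. -/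
/-!
A nonzero form in `W` killing `v` is found among the squares `ℓ²` of linear forms `ℓ` in
`x₀, x₁` alone: the matrix of `ℓ²` is `ℓℓᵀ`, which sends `v` to `ℓ(v) ℓ`, and a nonzero
such `ℓ` with `ℓ(v) = 0` exists because only the two coordinates `v₀, v₁` constrain it.
The form `x₀² + x₁² + x₂x₃` is nondegenerate: its matrix is an involution.
-/

open Matrix

/-- The span of the symmetric matrices of the quadratic forms
`x₀², x₀x₁, x₁², x₂x₃` on `ℂ⁴`. -/
noncomputable def webW : Submodule ℂ (Matrix (Fin 4) (Fin 4) ℂ) :=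
  Submodule.span ℂ
    {single 0 0 (1 : ℂ),
     single 0 1 (1 : ℂ) + single 1 0 (1 : ℂ),
     single 1 1 (1 : ℂ),
     single 2 3 (1 : ℂ) + single 3 2 (1 : ℂ)}

noncomputable def webBasis : Fin 4 → Matrix (Fin 4) (Fin 4) ℂ :=
  ![single 0 0 1, single 0 1 1 + single 1 0 1, single 1 1 1, single 2 3 1 + single 3 2 1]

theorem span_range_webBasis : Submodule.span ℂ (Set.range webBasis) = webW := by
  rw [webW, webBasis, Matrix.range_cons, Matrix.range_cons, Matrix.range_cons, Matrix.range_cons,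
    Matrix.range_empty, Set.union_empty]
  simp only [Set.singleton_union]

theorem webBasis_mem_webW (i : Fin 4) : webBasis i ∈ webW :=
  span_range_webBasis ▸ Submodule.subset_span ⟨i, rfl⟩

/-- The coefficients are read off the entries `(0,0), (0,1), (1,1), (2,3)`. -/
theorem linearIndependent_webBasis : LinearIndependent ℂ webBasis := by
  rw [Fintype.linearIndependent_iff]
  intro c hc i
  have h00 := congr_fun₂ hc 0 0
  have h01 := congr_fun₂ hc 0 1
  have h11 := congr_fun₂ hc 1 1
  have h23 := congr_fun₂ hc 2 3
  simp [webBasis, Fin.sum_univ_four, single] at h00 h01 h11 h23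
  fin_cases i <;> assumption

theorem finrank_webW : Module.finrank ℂ webW = 4 := by
  rw [← span_range_webBasis, finrank_span_eq_card linearIndependent_webBasis, Fintype.card_fin]

theorem webBasis_zero_add_two_add_three_mul_self :
    (webBasis 0 + webBasis 2 + webBasis 3) * (webBasis 0 + webBasis 2 + webBasis 3) = 1 := by
  ext i j
  fin_cases i <;> fin_cases j <;> simp [webBasis, single, mul_apply, one_apply]

theorem exists_isUnit_mem_webW : ∃ M ∈ webW, IsUnit M :=
  ⟨_, add_mem (add_mem (webBasis_mem_webW 0) (webBasis_mem_webW 2)) (webBasis_mem_webW 3),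
    IsUnit.of_mul_eq_one _ webBasis_zero_add_two_add_three_mul_self⟩

theorem vecMulVec_mem_webW (a b : ℂ) : vecMulVec ![a, b, 0, 0] ![a, b, 0, 0] ∈ webW := by
  have h : vecMulVec ![a, b, 0, 0] ![a, b, 0, 0] =
      (a * a) • webBasis 0 + (a * b) • webBasis 1 + (b * b) • webBasis 2 := by
    ext i j
    fin_cases i <;> fin_cases j <;> simp [webBasis, single, vecMulVec_apply, mul_comm]
  rw [h]
  exact add_mem (add_mem (Submodule.smul_mem _ _ (webBasis_mem_webW 0))
    (Submodule.smul_mem _ _ (webBasis_mem_webW 1))) (Submodule.smul_mem _ _ (webBasis_mem_webW 2))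

theorem exists_pair_ne_zero_dotProduct_eq_zero {R : Type*} [CommRing R] [Nontrivial R]
    (v : Fin 4 → R) : ∃ a b : R, ![a, b, 0, 0] ≠ 0 ∧ ![a, b, 0, 0] ⬝ᵥ v = 0 := by
  obtain ⟨u, hu, huv⟩ := exists_ne_zero_dotProduct_eq_zero ![v 0, v 1]
  refine ⟨u 0, u 1, fun h => hu ?_, ?_⟩
  · ext i
    fin_cases i
    · simpa using congr_fun h 0
    · simpa using congr_fun h 1
  · simpa [dotProduct, Fin.sum_univ_four, Fin.sum_univ_two] using huv

/-- the web spanned by `x₀², x₀x₁, x₁², x₂x₃` is 4-dimensional,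
contains an invertible matrix, and every `v ∈ ℂ⁴` is in the kernel of some
nonzero member of the web. -/
theorem stmt_11 :
    Module.finrank ℂ webW = 4 ∧
    (∃ M ∈ webW, IsUnit M) ∧
    ∀ v : Fin 4 → ℂ, ∃ M ∈ webW, M ≠ 0 ∧ M.mulVec v = 0 := by
  refine ⟨finrank_webW, exists_isUnit_mem_webW, fun v => ?_⟩
  obtain ⟨a, b, hw, hwv⟩ := exists_pair_ne_zero_dotProduct_eq_zero v
  refine ⟨vecMulVec ![a, b, 0, 0] ![a, b, 0, 0], vecMulVec_mem_webW a b, ?_, ?_⟩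
  · rwa [Ne, vecMulVec_eq_zero, or_self]
  · rw [vecMulVec_mulVec, hwv, MulOpposite.op_zero, zero_smul]
end
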